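/- arXiv:1412.7865 — 4 statements merged into one kernel-verified Lean document; each statement's English description precedes it below -/
import Mathlib

section
/- In B^{(n)} = F_2[X_1,...,X_n]/(X_1^2,...,X_n^2), the elementary symmetric polynomials satisfy \sigma_{a,n} \cdot \sigma_{b,n} = \binom{a+b}{a} \bmod 2 \cdot \sigma_{a+b,n}, where \sigma_{k,n} = \sum_{1\le i_1 < \cdots < i_k \le n} x_{i_1}\cdots x_{i_k}. -/
open MvPolynomial

noncomputable def squaresIdeal (n : ℕ) : Ideal (MvPolynomial (Fin n) (ZMod 2)) :=
  Ideal.span (Set.range fun i : Fin n => (X i : MvPolynomial (Fin n) (ZMod 2)) ^ 2)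

abbrev B (n : ℕ) := MvPolynomial (Fin n) (ZMod 2) ⧸ squaresIdeal n

noncomputable def Bmk (n : ℕ) : MvPolynomial (Fin n) (ZMod 2) →+* B n :=
  Ideal.Quotient.mk (squaresIdeal n)

noncomputable def Bcomp (n k : ℕ) : Submodule (ZMod 2) (B n) :=
  (homogeneousSubmodule (Fin n) (ZMod 2) k).map
    (Ideal.Quotient.mkₐ (ZMod 2) (squaresIdeal n)).toLinearMap

noncomputable def psymm (n : ℕ) (S : Finset (Fin n)) (j : ℕ) :
    MvPolynomial (Fin n) (ZMod 2) :=
  ∑ t ∈ S.powersetCard j, ∏ i ∈ t, X i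

lemma nondisj_mem (n : ℕ) (S T : Finset (Fin n)) (h : ¬ Disjoint S T) :
    (∏ i ∈ S, X i) * ∏ i ∈ T, X i ∈ squaresIdeal n := by
  obtain ⟨i, hiS, hiT⟩ := Finset.not_disjoint_iff.mp h
  have heq : (∏ i ∈ S, X i) * ∏ i ∈ T, (X i : MvPolynomial (Fin n) (ZMod 2)) =
      ((∏ j ∈ S.erase i, X j) * ∏ j ∈ T.erase i, X j) * X i ^ 2 := by
    rw [← Finset.mul_prod_erase S X hiS, ← Finset.mul_prod_erase T X hiT]; ring
  rw [heq]
  exact Ideal.mul_mem_left _ _ (Ideal.subset_span ⟨i, rfl⟩)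

theorem esymm_mul_esymm (n a b : ℕ) :
    Bmk n (esymm (Fin n) (ZMod 2) a) * Bmk n (esymm (Fin n) (ZMod 2) b) =
      (((a + b).choose a : ZMod 2)) • Bmk n (esymm (Fin n) (ZMod 2) (a + b)) := by
  classical
  rw [← map_mul]
  have h1 : esymm (Fin n) (ZMod 2) a * esymm (Fin n) (ZMod 2) b =
      ∑ p ∈ (Finset.univ.powersetCard a ×ˢ Finset.univ.powersetCard b),
        (∏ i ∈ p.1, X i) * ∏ i ∈ p.2, X i := by
    rw [esymm, esymm, Finset.sum_mul_sum, Finset.sum_product]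
  rw [h1, ← Finset.sum_filter_add_sum_filter_not _ (fun p => Disjoint p.1 p.2), map_add]
  have h2 : Bmk n (∑ p ∈ (Finset.univ.powersetCard a ×ˢ Finset.univ.powersetCard b).filter
      (fun p => ¬ Disjoint p.1 p.2), (∏ i ∈ p.1, X i) * ∏ i ∈ p.2, X i) = 0 := by
    rw [show (Bmk n : _ →+* B n) = Ideal.Quotient.mk (squaresIdeal n) from rfl,
      Ideal.Quotient.eq_zero_iff_mem]
    refine Ideal.sum_mem _ (fun p hp => ?_)
    exact nondisj_mem n p.1 p.2 (Finset.mem_filter.mp hp).2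
  rw [h2, add_zero]
  have h3 : ∑ p ∈ (Finset.univ.powersetCard a ×ˢ Finset.univ.powersetCard b).filter
      (fun p => Disjoint p.1 p.2), (∏ i ∈ p.1, X i) * ∏ i ∈ p.2, X i =
      ((a + b).choose a) • esymm (Fin n) (ZMod 2) (a + b) := by
    have hre : ∀ p ∈ (Finset.univ.powersetCard a ×ˢ Finset.univ.powersetCard b).filter
        (fun p => Disjoint p.1 p.2), (∏ i ∈ p.1, X i) * ∏ i ∈ p.2, (X i : MvPolynomial (Fin n) (ZMod 2)) =
        ∏ i ∈ p.1 ∪ p.2, X i := by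
      intro p hp
      exact (Finset.prod_union (Finset.mem_filter.mp hp).2).symm
    rw [Finset.sum_congr rfl hre]
    rw [show ((a + b).choose a) • esymm (Fin n) (ZMod 2) (a + b) =
        ∑ q ∈ (Finset.univ.powersetCard (a + b)).sigma (fun U => U.powersetCard a),
          ∏ i ∈ q.1, (X i : MvPolynomial (Fin n) (ZMod 2)) from ?_]
    · refine Finset.sum_nbij' (fun p => ⟨p.1 ∪ p.2, p.1⟩) (fun q => (q.2, q.1 \ q.2)) ?_ ?_ ?_ ?_ ?_
      · intro p hp
        simp only [Finset.mem_filter, Finset.mem_product, Finset.mem_powersetCard_univ] at hp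
        obtain ⟨⟨ha, hb⟩, hd⟩ := hp
        simp [Finset.mem_sigma, Finset.mem_powersetCard, Finset.subset_univ,
          Finset.card_union_of_disjoint hd, ha, hb, Finset.subset_union_left]
      · intro q hq
        simp only [Finset.mem_sigma, Finset.mem_powersetCard_univ, Finset.mem_powersetCard] at hq
        obtain ⟨hU, hsub, ha⟩ := hq
        simp only [Finset.mem_filter, Finset.mem_product, Finset.mem_powersetCard_univ]
        refine ⟨⟨ha, ?_⟩, Finset.disjoint_sdiff⟩
        rw [Finset.card_sdiff_of_subset hsub]
        omega
      · intro p hp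
        simp only [Finset.mem_filter, Finset.mem_product] at hp
        ext <;> simp [Finset.union_sdiff_cancel_left hp.2]
      · intro q hq
        simp only [Finset.mem_sigma, Finset.mem_powersetCard] at hq
        simp [Finset.union_sdiff_of_subset hq.2.1]
      · intro p hp; rfl
    · rw [Finset.sum_sigma]
      rw [esymm, Finset.smul_sum]
      refine Finset.sum_congr rfl (fun U hU => ?_)
      dsimp only
      rw [Finset.sum_const, Finset.card_powersetCard,
        (Finset.mem_powersetCard_univ.mp hU)]
  rw [h3, map_nsmul, Nat.cast_smul_eq_nsmul]
end

section
/- Let d \ge 2 and n = 3d, and define \gamma(n,k,d) = \sum_{j=0}^{\lfloor k/d \rfloor} (-1)^j \binom{n}{k-jd}. Then \gamma(3d,k,d) > 0 for all 0 \le k < 2d, \gamma(3d,2d,d) = 1, and \gamma(3d,2d+1,d) < 0. -/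
/-- `γ n k d` is the coefficient of `z^k` in the formal power series `(1+z)^n / (1+z^d)`. -/
def gam (n k d : ℕ) : ℤ :=
  ∑ j ∈ Finset.range (k / d + 1), (-1 : ℤ) ^ j * (n.choose (k - j * d) : ℤ)

lemma choose_lt_succ {n s : ℕ} (h : 2 * s + 2 ≤ n) : n.choose s < n.choose (s + 1) := by
  have h1 : n.choose (s+1) * (s+1) = n.choose s * (n - s) := Nat.choose_succ_right_eq n s
  have hpos : 0 < n.choose s := Nat.choose_pos (by omega)
  have h2 : n.choose s * (s + 1) < n.choose s * (n - s) :=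
    Nat.mul_lt_mul_of_pos_left (by omega) hpos
  rw [← h1] at h2
  exact Nat.lt_of_mul_lt_mul_right h2

lemma choose_lt_half {n a b : ℕ} (hab : a < b) (hb : 2 * b ≤ n) :
    n.choose a < n.choose b := by
  induction b with
  | zero => omega
  | succ m ih =>
    have hstep : n.choose m < n.choose (m + 1) := choose_lt_succ (by omega)
    rcases Nat.lt_or_ge a m with h | h
    · exact (ih h (by omega)).trans hstep
    · have : a = m := by omega
      subst this; exact hstep

lemma choose_lt {n a b : ℕ} (hab : a < b) (habn : a + b < n) :
    n.choose a < n.choose b := by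
  rcases le_or_gt (2 * b) n with h | h
  · exact choose_lt_half hab h
  · have hbn : b ≤ n := by omega
    rw [← Nat.choose_symm hbn]
    exact choose_lt_half (by omega) (by omega)

theorem gamma_three_d (d : ℕ) (hd : 2 ≤ d) :
    (∀ k < 2 * d, 0 < gam (3 * d) k d) ∧
      gam (3 * d) (2 * d) d = 1 ∧ gam (3 * d) (2 * d + 1) d < 0 := by
  refine ⟨?_, ?_, ?_⟩
  · intro k hk
    rcases Nat.lt_or_ge k d with h | h
    · have hdiv : k / d = 0 := Nat.div_eq_of_lt h
      have hpos : 0 < (3 * d).choose k := Nat.choose_pos (by omega)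
      simp [gam, hdiv]
      exact_mod_cast hpos
    · have hdiv : k / d = 1 := Nat.div_eq_of_lt_le (by omega) (by omega)
      have hlt : (3 * d).choose (k - d) < (3 * d).choose k := choose_lt (by omega) (by omega)
      simp [gam, hdiv, Finset.sum_range_succ]
      omega
  · have hdiv : 2 * d / d = 2 := Nat.div_eq_of_lt_le (by omega) (by omega)
    have hsymm : (3 * d).choose (2 * d) = (3 * d).choose d := by
      have h := Nat.choose_symm (show 2 * d ≤ 3 * d by omega)
      rw [show (3:ℕ) * d - 2 * d = d by omega] at h
      exact h.symm
    have e1 : 2 * d - d = d := by omega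
    have e2 : 2 * d - 2 * d = 0 := by omega
    simp [gam, hdiv, Finset.sum_range_succ, e1, e2, hsymm]
  · have hdiv : (2 * d + 1) / d = 2 := Nat.div_eq_of_lt_le (by omega) (by omega)
    have e1 : 2 * d + 1 - d = d + 1 := by omega
    have e2 : 2 * d + 1 - 2 * d = 1 := by omega
    have hsymm : (3 * d).choose (2 * d + 1) = (3 * d).choose (d - 1) := by
      have h := Nat.choose_symm (show 2 * d + 1 ≤ 3 * d by omega)
      rw [show (3:ℕ) * d - (2 * d + 1) = d - 1 by omega] at h
      exact h.symm
    -- key: choose (3d) (d+1) > choose (3d) (d-1) + 3d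
    have ha : 3 * d ≤ (3 * d).choose (d - 1) := by
      have := choose_lt_half (a := 1) (b := d - 1) (n := 3 * d)
      rcases Nat.lt_or_ge 2 d with h2 | h2
      · have := choose_lt_half (a := 1) (b := d - 1) (n := 3 * d) (by omega) (by omega)
        rw [Nat.choose_one_right] at this; omega
      · have hd2 : d = 2 := by omega
        subst hd2; decide
    have hb : (3 * d).choose d * d = (3 * d).choose (d - 1) * (2 * d + 1) := by
      have h1 := Nat.choose_succ_right_eq (3 * d) (d - 1)
      have hd1 : d - 1 + 1 = d := by omega
      rw [hd1] at h1
      rw [h1]; congr 1; omega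
    have hc : (3 * d).choose (d + 1) * (d + 1) = (3 * d).choose d * (2 * d) := by
      have h1 := Nat.choose_succ_right_eq (3 * d) d
      rw [h1]; congr 1; omega
    have h3 : 3 * (3 * d).choose (d - 1) ≤ (3 * d).choose (d + 1) := by
      have key : 3 * (3 * d).choose (d - 1) * (d * (d + 1)) ≤
          (3 * d).choose (d + 1) * (d * (d + 1)) := by
        have : (3 * d).choose (d + 1) * (d * (d + 1)) =
            (3 * d).choose (d - 1) * ((2 * d + 1) * (2 * d)) := by
          calc (3 * d).choose (d + 1) * (d * (d + 1))
              = ((3 * d).choose (d + 1) * (d + 1)) * d := by ring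
            _ = ((3 * d).choose d * (2 * d)) * d := by rw [hc]
            _ = ((3 * d).choose d * d) * (2 * d) := by ring
            _ = ((3 * d).choose (d - 1) * (2 * d + 1)) * (2 * d) := by rw [hb]
            _ = (3 * d).choose (d - 1) * ((2 * d + 1) * (2 * d)) := by ring
        rw [this]
        have : 3 * (d * (d + 1)) ≤ (2 * d + 1) * (2 * d) := by nlinarith
        calc 3 * (3 * d).choose (d - 1) * (d * (d + 1))
            = (3 * d).choose (d - 1) * (3 * (d * (d + 1))) := by ring
          _ ≤ (3 * d).choose (d - 1) * ((2 * d + 1) * (2 * d)) :=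
              Nat.mul_le_mul_left _ this
      exact Nat.le_of_mul_le_mul_right key (by positivity)
    simp [gam, hdiv, Finset.sum_range_succ, e1, e2, hsymm]
    omega
end

section
/- Let \lambda \in B^{(n)} be homogeneous of degree d, let k < n, and suppose that multiplication by \lambda from the degree-k component B^{(n)}_k to B^{(n)}_{k+d} is injective. Then multiplication by \lambda from B^{(n)}_{k-1} to B^{(n)}_{k-1+d} is also injective. -/
open MvPolynomial

/-!
Multiplication by `λ` commutes with multiplication by the variables `X i`, so if `λ μ = 0` with
`μ` of degree `k - 1`, then every `X i μ` is an element of degree `k` killed by `λ`, hence zero.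
It remains to see that an element `μ` of degree `k - 1 < n` with `X i μ = 0` for all `i` vanishes:
a square-free monomial `m` of `μ` misses some variable `X i`, and then `X i m` is a square-free
monomial of `X i μ`.
-/

theorem Finsupp.exists_eq_zero_of_degree_lt_card {σ : Type*} [Fintype σ] (m : σ →₀ ℕ)
    (h : m.degree < Fintype.card σ) : ∃ i, m i = 0 := by
  by_contra! hm
  have : Fintype.card σ ≤ m.degree := by
    rw [Finsupp.degree_eq_sum, Fintype.card_eq_sum_ones]
    exact Finset.sum_le_sum fun i _ => Nat.one_le_iff_ne_zero.mpr (hm i)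
  omega

lemma mem_squaresIdeal_iff {n : ℕ} (q : MvPolynomial (Fin n) (ZMod 2)) :
    q ∈ squaresIdeal n ↔ ∀ m ∈ q.support, ∃ i, 2 ≤ m i := by
  have hspan : squaresIdeal n = Ideal.span ((fun s => monomial s (1 : ZMod 2)) ''
      Set.range fun i : Fin n => Finsupp.single i 2) := by
    simp only [squaresIdeal, ← Set.range_comp, Function.comp_def, X_pow_eq_monomial]
  rw [hspan, mem_ideal_span_monomial_image]
  simp only [Set.exists_range_iff, Finsupp.single_le_iff]

lemma Bmk_X_mul_mem_Bcomp {n k : ℕ} (i : Fin n) {μ : B n} (hμ : μ ∈ Bcomp n k) :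
    Bmk n (X i) * μ ∈ Bcomp n (k + 1) := by
  obtain ⟨q, hq, rfl⟩ := hμ
  refine ⟨X i * q, ?_, map_mul (Bmk n) (X i) q⟩
  rw [SetLike.mem_coe, mem_homogeneousSubmodule, add_comm]
  exact (isHomogeneous_X _ i).mul hq

lemma eq_zero_of_Bmk_X_mul_eq_zero {n k : ℕ} (hk : k < n) {μ : B n} (hμ : μ ∈ Bcomp n k)
    (hX : ∀ i, Bmk n (X i) * μ = 0) : μ = 0 := by
  obtain ⟨q, hq, rfl⟩ := hμ
  replace hX : ∀ i, X i * q ∈ squaresIdeal n := fun i =>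
    Ideal.Quotient.eq_zero_iff_mem.mp ((map_mul (Bmk n) _ _).trans (hX i))
  refine Ideal.Quotient.eq_zero_iff_mem.mpr ((mem_squaresIdeal_iff q).mpr fun m hm => ?_)
  by_contra! hsqfree
  have hdeg : m.degree = k := by
    rw [Finsupp.degree_eq_weight_one]
    exact hq (mem_support_iff.mp hm)
  obtain ⟨i, hi⟩ := m.exists_eq_zero_of_degree_lt_card (by simpa [hdeg] using hk)
  have hXm : Finsupp.single i 1 + m ∈ (X i * q).support := by
    rwa [mem_support_iff, coeff_X_mul, ← mem_support_iff]
  obtain ⟨j, hj⟩ := (mem_squaresIdeal_iff _).mp (hX i) _ hXm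
  rcases eq_or_ne i j with rfl | hij
  · simp [hi] at hj
  · have hmj := hsqfree j
    rw [Finsupp.add_apply, Finsupp.single_eq_of_ne' hij, zero_add] at hj
    omega

theorem mul_injective_of_succ {n k : ℕ} (hk : k + 1 < n) {a : B n}
    (hinj : ∀ μ ∈ Bcomp n (k + 1), a * μ = 0 → μ = 0) :
    ∀ μ ∈ Bcomp n k, a * μ = 0 → μ = 0 := fun μ hμ haμ =>
  eq_zero_of_Bmk_X_mul_eq_zero (by omega) hμ fun i =>
    hinj _ (Bmk_X_mul_mem_Bcomp i hμ) (by rw [mul_left_comm, haμ, mul_zero])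

theorem mul_injective_of_lower_general (n k : ℕ) (hk : k < n)
    (p : MvPolynomial (Fin n) (ZMod 2))
    (hinj : ∀ μ ∈ Bcomp n k, Bmk n p * μ = 0 → μ = 0) :
    ∀ μ ∈ Bcomp n (k - 1), Bmk n p * μ = 0 → μ = 0 := by
  rcases k with _ | k
  · exact hinj
  · exact mul_injective_of_succ hk hinj

theorem mul_injective_of_lower (n d k : ℕ) (hk : k < n) (hk1 : 1 ≤ k)
    (p : MvPolynomial (Fin n) (ZMod 2)) (hp : p.IsHomogeneous d)
    (hinj : ∀ μ ∈ Bcomp n k, Bmk n p * μ = 0 → μ = 0) :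
    ∀ μ ∈ Bcomp n (k - 1), Bmk n p * μ = 0 → μ = 0 :=
  mul_injective_of_lower_general n k hk p hinj
end

section
/- Let d = 2^m and n = 3d = 2^{m+1} + 2^m. Then for any choice of 2^{m+1} distinct indices i_1 < \cdots < i_{2^{m+1}} in {1,...,n}, in B^{(n)} one has \sigma_d(x_{i_1},...,x_{i_{2^{m+1}}}) \cdot \sigma_{d,n} = x_{i_1}\cdots x_{i_{2^{m+1}}} + \sigma_{2d,n}. -/
open MvPolynomial

open Finset

lemma chooseA : ∀ m r : ℕ, r < 2 ^ m → ((2 ^ m + r).choose (2 ^ m) : ZMod 2) = 1 := by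
  haveI : Fact (Nat.Prime 2) := ⟨Nat.prime_two⟩
  intro m
  induction m with
  | zero => intro r hr; interval_cases r; decide
  | succ m ih =>
    intro r hr
    have h := Choose.choose_modEq_choose_mod_mul_choose_div_nat
      (p := 2) (n := 2 ^ (m+1) + r) (k := 2 ^ (m+1))
    have hc : ((2 ^ (m+1) + r).choose (2 ^ (m+1)) : ZMod 2)
        = (((2 ^ (m+1) + r) % 2).choose (2 ^ (m+1) % 2) *
            ((2 ^ (m+1) + r) / 2).choose (2 ^ (m+1) / 2) : ℕ) :=
      (ZMod.natCast_eq_natCast_iff _ _ _).mpr h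
    have h1 : 2 ^ (m+1) % 2 = 0 := by
      simp [pow_succ, Nat.mul_mod_left, Nat.mul_comm]
    have h2 : 2 ^ (m+1) / 2 = 2 ^ m := by
      rw [pow_succ, Nat.mul_div_cancel] ; norm_num
    have h3 : (2 ^ (m+1) + r) / 2 = 2 ^ m + r / 2 := by
      rw [pow_succ, mul_comm, Nat.add_comm, Nat.add_mul_div_left _ _ (by norm_num), Nat.add_comm]
    rw [hc, h1, h2, h3, Nat.choose_zero_right, one_mul]
    exact ih (r / 2) (Nat.div_lt_of_lt_mul (by rw [pow_succ] at hr; omega))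

lemma chooseB : ∀ m : ℕ, ((2 ^ (m+1)).choose (2 ^ m) : ZMod 2) = 0 := by
  haveI : Fact (Nat.Prime 2) := ⟨Nat.prime_two⟩
  intro m
  induction m with
  | zero => decide
  | succ m ih =>
    have h := Choose.choose_modEq_choose_mod_mul_choose_div_nat
      (p := 2) (n := 2 ^ (m+2)) (k := 2 ^ (m+1))
    have hc : ((2 ^ (m+2)).choose (2 ^ (m+1)) : ZMod 2)
        = ((2 ^ (m+2) % 2).choose (2 ^ (m+1) % 2) *
            (2 ^ (m+2) / 2).choose (2 ^ (m+1) / 2) : ℕ) :=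
      (ZMod.natCast_eq_natCast_iff _ _ _).mpr h
    have h1 : ∀ k, 2 ^ (k+1) % 2 = 0 := fun k => by
      simp [pow_succ, Nat.mul_mod_left, Nat.mul_comm]
    have h2 : ∀ k, 2 ^ (k+1) / 2 = 2 ^ k := fun k => by
      rw [pow_succ, Nat.mul_div_cancel]; norm_num
    rw [hc, h1, h1, h2, h2, Nat.choose_zero_right, Nat.cast_mul, Nat.cast_one, one_mul, ih]

theorem esymm_pow_two_identity (m : ℕ) (S : Finset (Fin (3 * 2 ^ m)))
    (hS : S.card = 2 ^ (m + 1)) :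
    Bmk (3 * 2 ^ m) (psymm (3 * 2 ^ m) S (2 ^ m)) *
        Bmk (3 * 2 ^ m) (esymm (Fin (3 * 2 ^ m)) (ZMod 2) (2 ^ m)) =
      Bmk (3 * 2 ^ m) (∏ i ∈ S, X i) +
        Bmk (3 * 2 ^ m) (esymm (Fin (3 * 2 ^ m)) (ZMod 2) (2 ^ (m + 1))) := by
  classical
  have hcardS : S.card = 2 * 2 ^ m := by rw [hS, pow_succ, mul_comm]
  set g : Finset (Fin (3 * 2 ^ m)) → B (3 * 2 ^ m) := fun w => Bmk (3 * 2 ^ m) (∏ i ∈ w, X i) with hg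
  have hBmkzero : ∀ t u : Finset (Fin (3 * 2 ^ m)), ¬ Disjoint t u →
      Bmk (3 * 2 ^ m) ((∏ i ∈ t, X i) * ∏ i ∈ u, X i) = 0 := by
    intro t u h
    rw [Finset.not_disjoint_iff] at h
    obtain ⟨i, hit, hiu⟩ := h
    rw [← Finset.prod_erase_mul t _ hit, ← Finset.prod_erase_mul u _ hiu]
    have heq : (∏ j ∈ t.erase i, X j) * X i * ((∏ j ∈ u.erase i, X j) * X i)
        = (X i ^ 2 : MvPolynomial (Fin (3 * 2 ^ m)) (ZMod 2)) *
          ((∏ j ∈ t.erase i, X j) * ∏ j ∈ u.erase i, X j) := by ring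
    rw [heq, map_mul]
    have hXi : Bmk (3 * 2 ^ m) ((X i : MvPolynomial (Fin (3 * 2 ^ m)) (ZMod 2)) ^ 2) = 0 := by
      rw [Bmk, Ideal.Quotient.eq_zero_iff_mem]
      exact Ideal.subset_span ⟨i, rfl⟩
    rw [hXi, zero_mul]
  have hSmem : S ∈ Finset.powersetCard (2 * 2 ^ m) (univ : Finset (Fin (3 * 2 ^ m))) := by
    rw [Finset.mem_powersetCard]
    exact ⟨Finset.subset_univ _, hcardS⟩
  calc
    Bmk (3 * 2 ^ m) (psymm (3 * 2 ^ m) S (2 ^ m)) * Bmk (3 * 2 ^ m) (esymm (Fin (3 * 2 ^ m)) (ZMod 2) (2 ^ m))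
      = ∑ t ∈ S.powersetCard (2 ^ m), ∑ u ∈ Finset.powersetCard (2 ^ m) (univ : Finset (Fin (3 * 2 ^ m))),
          Bmk (3 * 2 ^ m) ((∏ i ∈ t, X i) * ∏ i ∈ u, X i) := by
        simp only [psymm, esymm, map_sum, Finset.sum_mul_sum, ← map_mul]
    _ = ∑ t ∈ S.powersetCard (2 ^ m),
          ∑ u ∈ (Finset.powersetCard (2 ^ m) (univ : Finset (Fin (3 * 2 ^ m)))).filter
            (fun u => Disjoint t u), g (t ∪ u) := by
        refine Finset.sum_congr rfl fun t ht => ?_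
        rw [← Finset.sum_filter_of_ne (fun u _ hne => by
          by_contra hdis; exact hne (hBmkzero t u hdis))]
        refine Finset.sum_congr rfl fun u hu => ?_
        rw [Finset.mem_filter] at hu
        exact congrArg _ (Finset.prod_union hu.2).symm
    _ = ∑ x ∈ (S.powersetCard (2 ^ m)).sigma
          (fun t => (Finset.powersetCard (2 ^ m) (univ : Finset (Fin (3 * 2 ^ m)))).filter
            (fun u => Disjoint t u)), g (x.1 ∪ x.2) :=
        Finset.sum_sigma' _ _ _
    _ = ∑ x ∈ (Finset.powersetCard (2 * 2 ^ m) (univ : Finset (Fin (3 * 2 ^ m)))).sigma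
          (fun w => (w ∩ S).powersetCard (2 ^ m)), g x.1 := by
        refine Finset.sum_nbij' (fun x => ⟨x.1 ∪ x.2, x.1⟩) (fun x => ⟨x.2, x.1 \ x.2⟩)
          ?_ ?_ ?_ ?_ ?_
        · rintro ⟨t, u⟩ hx
          simp only [Finset.mem_sigma, Finset.mem_powersetCard, Finset.mem_filter] at hx ⊢
          obtain ⟨⟨htS, htc⟩, ⟨⟨-, huc⟩, hdis⟩⟩ := hx
          refine ⟨⟨Finset.subset_univ _, ?_⟩, ?_, htc⟩
          · rw [Finset.card_union_of_disjoint hdis, htc, huc, two_mul]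
          · exact Finset.subset_inter Finset.subset_union_left htS
        · rintro ⟨w, t⟩ hx
          simp only [Finset.mem_sigma, Finset.mem_powersetCard, Finset.mem_filter] at hx ⊢
          obtain ⟨⟨-, hwc⟩, ⟨htw, htc⟩⟩ := hx
          have htw' : t ⊆ w := htw.trans Finset.inter_subset_left
          refine ⟨⟨htw.trans Finset.inter_subset_right, htc⟩,
            ⟨Finset.subset_univ _, ?_⟩, Finset.disjoint_sdiff⟩
          rw [Finset.card_sdiff_of_subset htw', hwc, htc, two_mul, Nat.add_sub_cancel]
        · rintro ⟨t, u⟩ hx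
          simp only [Finset.mem_sigma, Finset.mem_powersetCard, Finset.mem_filter] at hx
          simp [Finset.union_sdiff_cancel_left hx.2.2]
        · rintro ⟨w, t⟩ hx
          simp only [Finset.mem_sigma, Finset.mem_powersetCard, Finset.mem_filter] at hx
          have htw' : t ⊆ w := hx.2.1.trans Finset.inter_subset_left
          simp [Finset.union_sdiff_of_subset htw']
        · rintro ⟨t, u⟩ hx; rfl
    _ = ∑ w ∈ Finset.powersetCard (2 * 2 ^ m) (univ : Finset (Fin (3 * 2 ^ m))),
          (((w ∩ S).card.choose (2 ^ m) : ZMod 2)) • g w := by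
        rw [Finset.sum_sigma]
        refine Finset.sum_congr rfl fun w hw => ?_
        trans (∑ _s ∈ Finset.powersetCard (2 ^ m) (w ∩ S), g w)
        · rfl
        rw [Finset.sum_const, Finset.card_powersetCard, Nat.cast_smul_eq_nsmul]
    _ = ∑ w ∈ Finset.powersetCard (2 * 2 ^ m) (univ : Finset (Fin (3 * 2 ^ m))),
          (g w + if w = S then g w else 0) := by
        refine Finset.sum_congr rfl fun w hw => ?_
        rw [Finset.mem_powersetCard] at hw
        by_cases hwS : w = S
        · subst hwS
          rw [if_pos rfl, Finset.inter_self, hS, chooseB m, zero_smul,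
            ← two_smul (ZMod 2), show (2 : ZMod 2) = 0 by decide, zero_smul]
        · rw [if_neg hwS, add_zero]
          have hk_le : (w ∩ S).card ≤ 2 * 2 ^ m := by
            rw [← hcardS]; exact Finset.card_le_card Finset.inter_subset_right
          have hk_ne : (w ∩ S).card ≠ 2 * 2 ^ m := by
            intro hkeq
            have h1 : w ∩ S = S := Finset.eq_of_subset_of_card_le
              Finset.inter_subset_right (by rw [hkeq, hcardS])
            have h2 : S ⊆ w := by rw [← h1]; exact Finset.inter_subset_left
            exact hwS (Finset.eq_of_subset_of_card_le h2 (by rw [hw.2, hcardS])).symm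
          have hk_ge : 2 ^ m ≤ (w ∩ S).card := by
            have h3 := Finset.card_inter_add_card_union w S
            have h4 : (w ∪ S).card ≤ 3 * 2 ^ m := by
              simpa using Finset.card_le_univ (w ∪ S)
            omega
          have hr : (w ∩ S).card = 2 ^ m + ((w ∩ S).card - 2 ^ m) := by omega
          have hrlt : (w ∩ S).card - 2 ^ m < 2 ^ m := by
            omega
          rw [hr, chooseA m _ hrlt, one_smul]
    _ = Bmk (3 * 2 ^ m) (∏ i ∈ S, X i) + Bmk (3 * 2 ^ m) (esymm (Fin (3 * 2 ^ m)) (ZMod 2) (2 ^ (m + 1))) := by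
        rw [Finset.sum_add_distrib, Finset.sum_ite_eq' _ S g, if_pos hSmem]
        rw [add_comm]
        congr 1
        simp only [esymm, map_sum, hg]
        have : 2 ^ (m + 1) = 2 * 2 ^ m := by rw [pow_succ, mul_comm]
        rw [this]
end
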